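/- arXiv:2402.14452 — 7 statements merged into one kernel-verified Lean document; each statement's English description precedes it below -/
import Mathlib

section
/- Let X be a nonempty set, p a partial metric on X, and a a positive real number such that p(x,x) = a for all x ∈ X. Then for any sequence {x_n} in X and any r ≥ 0, the diameter of the rough statistical limit set satisfies diam(st-LIM^r x_n) ≤ 2r + 2a; that is, for all y, z ∈ st-LIM^r x_n one has p(y,z) ≤ 2r + 2a. -/
/-- A partial metric on a set `X`. -/
structure IsPartialMetric {X : Type*} (p : X → X → ℝ) : Prop where
  nonneg : ∀ x y : X, 0 ≤ p x y
  self_le : ∀ x y : X, p x x ≤ p x y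
  eq_iff : ∀ x y : X, x = y ↔ p x x = p x y ∧ p x y = p y y
  symm : ∀ x y : X, p x y = p y x
  triangle : ∀ x y z : X, p x y ≤ p x z + p z y - p z z

open Classical in
/-- `A ⊆ ℕ` has natural density `d`. -/
def HasNatDensity (A : Set ℕ) (d : ℝ) : Prop :=
  Filter.Tendsto
    (fun n : ℕ => (((Finset.range n).filter (fun k => k ∈ A)).card : ℝ) / (n : ℝ))
    Filter.atTop (nhds d)

/-- `l` is a rough statistical limit point of the sequence `x` with roughness degree `r`,
i.e. `l ∈ st-LIM^r x_n`. -/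
def RStatLimit {X : Type*} (p : X → X → ℝ) (x : ℕ → X) (r : ℝ) (l : X) : Prop :=
  ∀ ε : ℝ, 0 < ε → HasNatDensity {n : ℕ | r + ε ≤ |p (x n) l - p l l|} 0

/-!
Any two rough statistical limits `y`, `z` are both within `r + ε` of a common term `x n`,
because the two exceptional sets have density zero and hence cannot cover `ℕ`. The triangle
inequality through `x n` then gives `p y z ≤ 2r + p y y + p z z` for every partial metric.
-/

theorem hasNatDensity_univ : HasNatDensity Set.univ 1 := by
  refine tendsto_const_nhds.congr' ?_
  filter_upwards [Filter.eventually_ge_atTop 1] with n hn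
  have hn' : (n : ℝ) ≠ 0 := by positivity
  simp [hn']

theorem HasNatDensity.exists_notMem {A : Set ℕ} {d : ℝ} (h : HasNatDensity A d) (hd : d ≠ 1) :
    ∃ n, n ∉ A := by
  by_contra! hA
  rw [Set.eq_univ_of_forall hA] at h
  exact hd (tendsto_nhds_unique h hasNatDensity_univ)

theorem HasNatDensity.union_of_zero {A B : Set ℕ} (hA : HasNatDensity A 0)
    (hB : HasNatDensity B 0) : HasNatDensity (A ∪ B) 0 := by
  have hsum := hA.add hB
  rw [add_zero] at hsum
  refine squeeze_zero (fun n => by positivity) (fun n => ?_) hsum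
  rw [← add_div]
  gcongr
  norm_cast
  refine (Finset.card_le_card fun k => ?_).trans (Finset.card_union_le _ _)
  simp only [Finset.mem_filter, Finset.mem_union, Set.mem_union]
  tauto

theorem RStatLimit.exists_common_close {X : Type*} {p : X → X → ℝ} {x : ℕ → X} {r : ℝ}
    {y z : X} (hy : RStatLimit p x r y) (hz : RStatLimit p x r z) {ε : ℝ} (hε : 0 < ε) :
    ∃ n, |p (x n) y - p y y| < r + ε ∧ |p (x n) z - p z z| < r + ε := by
  obtain ⟨n, hn⟩ := ((hy ε hε).union_of_zero (hz ε hε)).exists_notMem zero_ne_one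
  simp only [Set.mem_union, Set.mem_ofPred_eq, not_or, not_le] at hn
  exact ⟨n, hn⟩

theorem IsPartialMetric.le_of_rStatLimit {X : Type*} {p : X → X → ℝ} (hp : IsPartialMetric p)
    {x : ℕ → X} {r : ℝ} {y z : X} (hy : RStatLimit p x r y) (hz : RStatLimit p x r z) :
    p y z ≤ 2 * r + p y y + p z z := by
  refine le_of_forall_pos_lt_add fun ε hε => ?_
  obtain ⟨n, hny, hnz⟩ := hy.exists_common_close hz (half_pos hε)
  have hy' := (abs_lt.mp hny).2
  have hz' := (abs_lt.mp hnz).2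
  calc p y z ≤ p y (x n) + p (x n) z - p (x n) (x n) := hp.triangle y z (x n)
    _ ≤ p (x n) y + p (x n) z := by linarith [hp.symm y (x n), hp.nonneg (x n) (x n)]
    _ < 2 * r + p y y + p z z + ε := by linarith

theorem diam_rStatLimit_le_general
    {X : Type*} (p : X → X → ℝ) (hp : IsPartialMetric p)
    (a : ℝ) (hself : ∀ x : X, p x x = a)
    (x : ℕ → X) (r : ℝ) :
    ∀ y z : X, RStatLimit p x r y → RStatLimit p x r z → p y z ≤ 2 * r + 2 * a := by
  intro y z hy hz
  have h := hp.le_of_rStatLimit hy hz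
  rw [hself y, hself z] at h
  linarith

/-- If all self-distances equal `a > 0`, then `diam (st-LIM^r x_n) ≤ 2r + 2a`. -/
theorem diam_rStatLimit_le
    {X : Type*} [Nonempty X] (p : X → X → ℝ) (hp : IsPartialMetric p)
    (a : ℝ) (ha : 0 < a) (hself : ∀ x : X, p x x = a)
    (x : ℕ → X) (r : ℝ) (hr : 0 ≤ r) :
    ∀ y z : X, RStatLimit p x r y → RStatLimit p x r z → p y z ≤ 2 * r + 2 * a :=
  diam_rStatLimit_le_general p hp a hself x r
end

section
/- Let X be a nonempty set and p a partial metric on X. If a sequence {x_n} in (X,p) is statistically convergent to x (i.e., for every ε > 0, d({n ∈ ℕ : |p(x_n,x) − p(x,x)| ≥ ε}) = 0), then for every r ≥ 0 the set {y ∈ X : p(x,y) ≤ p(x,x) + r and p(y,y) = p(x,x)} is contained in st-LIM^r x_n; that is, every point y of the closed ball of radius r centered at x whose self-distance equals that of x is a rough statistical limit point of {x_n} of roughness degree r. -/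
lemma hasNatDensity_zero_of_subset {A B : Set ℕ} (hAB : A ⊆ B)
    (hB : HasNatDensity B 0) : HasNatDensity A 0 :=
  squeeze_zero (fun _ => by positivity) (fun _ => by gcongr) hB

namespace IsPartialMetric

variable {X : Type*} {p : X → X → ℝ}

lemma self_le_right (hp : IsPartialMetric p) (x y : X) : p y y ≤ p x y :=
  hp.symm y x ▸ hp.self_le y x

lemma abs_sub_self (hp : IsPartialMetric p) (x y : X) : |p x y - p y y| = p x y - p y y :=
  abs_of_nonneg (sub_nonneg.2 (hp.self_le_right x y))

lemma sub_self_le_add (hp : IsPartialMetric p) (x y z : X) :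
    p x z - p z z ≤ (p x y - p y y) + (p y z - p z z) := by
  linarith [hp.triangle x z y]

end IsPartialMetric

theorem closedBall_subset_rStatLimit_general
    {X : Type*} (p : X → X → ℝ) (hp : IsPartialMetric p)
    (x : ℕ → X) (l : X)
    (h : ∀ ε : ℝ, 0 < ε → HasNatDensity {n : ℕ | ε ≤ |p (x n) l - p l l|} 0)
    (r : ℝ) :
    {y : X | p l y ≤ p l l + r ∧ p y y = p l l} ⊆ {y : X | RStatLimit p x r y} := by
  rintro y ⟨hball, hself⟩ ε hε
  refine hasNatDensity_zero_of_subset (fun n hn => ?_) (h ε hε)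
  simp only [Set.mem_ofPred_eq, hp.abs_sub_self] at hn ⊢
  linarith [hp.sub_self_le_add (x n) l y]

/-- If `x_n` statistically converges to `x`, then every point `y` of the closed ball of
radius `r` centered at `x` with `p y y = p x x` belongs to `st-LIM^r x_n`. -/
theorem closedBall_subset_rStatLimit
    {X : Type*} [Nonempty X] (p : X → X → ℝ) (hp : IsPartialMetric p)
    (x : ℕ → X) (l : X)
    (h : ∀ ε : ℝ, 0 < ε → HasNatDensity {n : ℕ | ε ≤ |p (x n) l - p l l|} 0)
    (r : ℝ) (hr : 0 ≤ r) :
    {y : X | p l y ≤ p l l + r ∧ p y y = p l l} ⊆ {y : X | RStatLimit p x r y} :=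
  closedBall_subset_rStatLimit_general p hp x l h r
end

section
/- Let X be a nonempty set, p a partial metric on X, and {x_n} a sequence in X. For every roughness degree r ≥ 0, the rough statistical limit set st-LIM^r x_n is a closed subset of X with respect to the topology on X generated by the open balls B^p_ε(x) = {y ∈ X : p(x,y) < p(x,x) + ε} for x ∈ X and ε > 0. -/
open Classical in
lemma hasNatDensity_zero_mono {A B : Set ℕ} (h : A ⊆ B) (hB : HasNatDensity B 0) :
    HasNatDensity A 0 := by
  unfold HasNatDensity at *
  refine squeeze_zero (fun n => by positivity) ?_ hB
  intro n
  have hsub : ((Finset.range n).filter (fun k => k ∈ A)) ⊆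
      ((Finset.range n).filter (fun k => k ∈ B)) := by
    intro k hk
    simp only [Finset.mem_filter] at *
    exact ⟨hk.1, h hk.2⟩
  gcongr

/-- `st-LIM^r x_n` is closed in the topology generated by the open balls of the
partial metric. -/
theorem rStatLimit_isClosed
    {X : Type*} [Nonempty X] (p : X → X → ℝ) (hp : IsPartialMetric p)
    (x : ℕ → X) (r : ℝ) (hr : 0 ≤ r) :
    @IsClosed X
      (TopologicalSpace.generateFrom
        {s : Set X | ∃ c : X, ∃ ε : ℝ, 0 < ε ∧ s = {y : X | p c y < p c c + ε}})
      {l : X | RStatLimit p x r l} := by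
  letI : TopologicalSpace X := TopologicalSpace.generateFrom
    {s : Set X | ∃ c : X, ∃ ε : ℝ, 0 < ε ∧ s = {y : X | p c y < p c c + ε}}
  rw [← isOpen_compl_iff]
  have key : ∀ l, l ∈ {l : X | RStatLimit p x r l}ᶜ →
      ∃ t ∈ {s : Set X | ∃ c : X, ∃ ε : ℝ, 0 < ε ∧ s = {y : X | p c y < p c c + ε}},
        l ∈ t ∧ t ⊆ {l : X | RStatLimit p x r l}ᶜ := by
    intro l hl
    simp only [Set.mem_compl_iff, Set.mem_setOf_eq, RStatLimit] at hl
    push_neg at hl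
    obtain ⟨ε, hε, hd⟩ := hl
    refine ⟨{y : X | p l y < p l l + ε / 2}, ⟨l, ε / 2, by linarith, rfl⟩,
      by simp only [Set.mem_setOf_eq]; linarith, ?_⟩
    intro y hy
    simp only [Set.mem_setOf_eq] at hy
    simp only [Set.mem_compl_iff, Set.mem_setOf_eq]
    intro hy2
    apply hd
    have h2 := hy2 (ε / 2) (by linarith)
    refine hasNatDensity_zero_mono ?_ h2
    intro n hn
    simp only [Set.mem_setOf_eq] at hn ⊢
    have h1 : p l l ≤ p (x n) l := by
      have := hp.self_le l (x n); rwa [hp.symm l (x n)] at this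
    have h1' : p y y ≤ p (x n) y := by
      have := hp.self_le y (x n); rwa [hp.symm y (x n)] at this
    rw [abs_of_nonneg (by linarith)] at hn
    rw [abs_of_nonneg (by linarith)]
    have htr := hp.triangle (x n) l y
    have hsym := hp.symm y l
    linarith
  choose t ht hlt hsub using key
  have hU : {l : X | RStatLimit p x r l}ᶜ =
      ⋃ (l : X) (h : l ∈ {l : X | RStatLimit p x r l}ᶜ), t l h := by
    ext z
    constructor
    · intro hz
      exact Set.mem_iUnion.2 ⟨z, Set.mem_iUnion.2 ⟨hz, hlt z hz⟩⟩
    · intro hz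
      obtain ⟨l, hl, hzt⟩ : ∃ l, ∃ h : l ∈ {l : X | RStatLimit p x r l}ᶜ, z ∈ t l h := by
        simpa using hz
      exact hsub l hl hzt
  rw [hU]
  exact isOpen_iUnion fun l => isOpen_iUnion fun h =>
    TopologicalSpace.isOpen_generateFrom_of_mem (ht l h)
end

section
/- Let X be a nonempty set, p a partial metric on X, and a a positive real number such that p(x,x) = a for all x ∈ X. If a sequence {x_n} in X is statistically bounded (i.e., for every fixed u ∈ X there exists a positive real number M such that d({n ∈ ℕ : p(x_n,u) ≥ M}) = 0), then there exists a non-negative real number r such that st-LIM^r x_n ≠ ∅. -/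
/-! Any point `u` serves as a centre, with roughness degree the statistical bound `M` at `u`:
since `0 ≤ p(u,u) ≤ p(x_n,u)`, the deviation `|p(x_n,u) - p(u,u)|` never exceeds `p(x_n,u)`,
so the exceptional sets for `u` lie inside the density-zero set `{n | M ≤ p(x_n,u)}`. -/

theorem HasNatDensity.zero_mono {A B : Set ℕ} (hB : HasNatDensity B 0) (hAB : A ⊆ B) :
    HasNatDensity A 0 := by
  refine squeeze_zero (fun n => by positivity) (fun n => ?_) hB
  gcongr

theorem IsPartialMetric.abs_sub_self_le {X : Type*} {p : X → X → ℝ} (hp : IsPartialMetric p)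
    (x y : X) : |p x y - p y y| ≤ p x y := by
  have hle : p y y ≤ p x y := hp.symm y x ▸ hp.self_le y x
  rw [abs_of_nonneg (sub_nonneg.mpr hle)]
  linarith [hp.nonneg y y]

theorem rStatLimit_nonempty_of_statBounded_general
    {X : Type*} [Nonempty X] (p : X → X → ℝ) (hp : IsPartialMetric p)
    (x : ℕ → X)
    (hbdd : ∀ u : X, ∃ M : ℝ, 0 < M ∧ HasNatDensity {n : ℕ | M ≤ p (x n) u} 0) :
    ∃ r : ℝ, 0 ≤ r ∧ ∃ l : X, RStatLimit p x r l := by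
  obtain ⟨u⟩ := ‹Nonempty X›
  obtain ⟨M, hM, hdens⟩ := hbdd u
  refine ⟨M, hM.le, u, fun ε hε => hdens.zero_mono fun n hn => ?_⟩
  have hdev : M + ε ≤ |p (x n) u - p u u| := hn
  show M ≤ p (x n) u
  linarith [hp.abs_sub_self_le (x n) u]

/-- If all self-distances equal `a > 0` and `x_n` is statistically bounded, then
`st-LIM^r x_n ≠ ∅` for some `r ≥ 0`. -/
theorem rStatLimit_nonempty_of_statBounded
    {X : Type*} [Nonempty X] (p : X → X → ℝ) (hp : IsPartialMetric p)
    (a : ℝ) (ha : 0 < a) (hself : ∀ x : X, p x x = a)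
    (x : ℕ → X)
    (hbdd : ∀ u : X, ∃ M : ℝ, 0 < M ∧ HasNatDensity {n : ℕ | M ≤ p (x n) u} 0) :
    ∃ r : ℝ, 0 ≤ r ∧ ∃ l : X, RStatLimit p x r l :=
  rStatLimit_nonempty_of_statBounded_general p hp x hbdd
end

section
/- Let X be a nonempty set, p a partial metric on X, and {x_n} a sequence in X. Let {x_{n_k}} be a subsequence of {x_n} (given by a strictly increasing map k ↦ n_k) such that the index set {n_1, n_2, …} has natural density 1. Then for every roughness degree r ≥ 0, st-LIM^r x_n ⊆ st-LIM^r x_{n_k}; that is, every rough statistical limit point of {x_n} is a rough statistical limit point of the subsequence {x_{n_k}}. -/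
/-!
Only the density of the exceptional set `A = {n | r + ε ≤ |p(x_n, l) - p(l, l)|}` matters. If `k ↦ n_k` is strictly increasing and its range
has density `d ≠ 0`, then exactly `k` of the indices `n_j` lie below `n_k`, so `k / n_k → d`.
The exceptional indices `k < K` of the subsequence inject via `k ↦ n_k` into the exceptional
indices below `n_K` of the full sequence, whence their proportion is at most
`(#A ∩ [0, n_K) / n_K) · (n_K / K) → 0 · d⁻¹ = 0`.
-/

open Filter Finset Topology

section Density

variable {nk : ℕ → ℕ}

theorem StrictMono.card_filter_range_mem_range (hmono : StrictMono nk) (n : ℕ)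
    [DecidablePred (· ∈ Set.range nk)] :
    #{m ∈ range (nk n) | m ∈ Set.range nk} = n := by
  have : {m ∈ range (nk n) | m ∈ Set.range nk} = (range n).image nk := by
    ext m
    simp only [mem_filter, mem_range, mem_image, Set.mem_range]
    constructor
    · rintro ⟨hm, j, rfl⟩
      exact ⟨j, hmono.lt_iff_lt.mp hm, rfl⟩
    · rintro ⟨j, hj, rfl⟩
      exact ⟨hmono hj, j, rfl⟩
  rw [this, card_image_of_injective _ hmono.injective, card_range]

theorem StrictMono.card_filter_range_comp_le (hmono : StrictMono nk) (P : ℕ → Prop)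
    [DecidablePred P] (n : ℕ) :
    #{k ∈ range n | P (nk k)} ≤ #{m ∈ range (nk n) | P m} :=
  card_le_card_of_injOn nk
    (fun k hk => by
      simp only [coe_filter, mem_range, Set.mem_ofPred_eq] at hk ⊢
      exact ⟨hmono hk.1, hk.2⟩)
    hmono.injective.injOn

theorem StrictMono.tendsto_div_of_hasNatDensity_range (hmono : StrictMono nk) {d : ℝ}
    (hd : HasNatDensity (Set.range nk) d) :
    Tendsto (fun n : ℕ => (n : ℝ) / nk n) atTop (𝓝 d) :=
  (hd.comp hmono.tendsto_atTop).congr fun n => by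
    simp only [Function.comp_apply, hmono.card_filter_range_mem_range]

theorem HasNatDensity.preimage_of_strictMono {A : Set ℕ} (hA : HasNatDensity A 0)
    (hmono : StrictMono nk) {d : ℝ} (hd : HasNatDensity (Set.range nk) d) (hd0 : d ≠ 0) :
    HasNatDensity (nk ⁻¹' A) 0 := by
  classical
  set density : ℕ → ℝ := fun n => #{m ∈ range n | m ∈ A} / n
  have hA_sub : Tendsto (fun n => density (nk n) * ((nk n : ℝ) / n)) atTop (𝓝 0) := by
    simpa using (hA.comp hmono.tendsto_atTop).mul
      ((hmono.tendsto_div_of_hasNatDensity_range hd).inv₀ hd0 |>.congr fun n => inv_div _ _)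
  refine squeeze_zero' (Eventually.of_forall fun n => by positivity) ?_ hA_sub
  filter_upwards [eventually_gt_atTop 0] with n hn
  have hnk : (0 : ℝ) < nk n := by exact_mod_cast hn.trans_le hmono.le_apply
  calc (#{k ∈ range n | k ∈ nk ⁻¹' A} : ℝ) / n
      ≤ #{m ∈ range (nk n) | m ∈ A} / n := by
        gcongr ?_ / _
        exact_mod_cast hmono.card_filter_range_comp_le (· ∈ A) n
    _ = density (nk n) * ((nk n : ℝ) / n) := by
        simp only [density]
        field_simp

end Density

theorem rStatLimit_subset_of_subseq_general
    {X : Type*} (p : X → X → ℝ)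
    (x : ℕ → X) (nk : ℕ → ℕ) (hmono : StrictMono nk)
    (hd : HasNatDensity (Set.range nk) 1)
    (r : ℝ) :
    {l : X | RStatLimit p x r l} ⊆ {l : X | RStatLimit p (fun k => x (nk k)) r l} :=
  fun _ hl ε hε => (hl ε hε).preimage_of_strictMono hmono hd one_ne_zero

/-- If `x_{n_k}` is a subsequence of `x_n` whose index set has natural density `1`,
then `st-LIM^r x_n ⊆ st-LIM^r x_{n_k}`. -/
theorem rStatLimit_subset_of_subseq
    {X : Type*} [Nonempty X] (p : X → X → ℝ) (hp : IsPartialMetric p)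
    (x : ℕ → X) (nk : ℕ → ℕ) (hmono : StrictMono nk)
    (hd : HasNatDensity (Set.range nk) 1)
    (r : ℝ) (hr : 0 ≤ r) :
    {l : X | RStatLimit p x r l} ⊆ {l : X | RStatLimit p (fun k => x (nk k)) r l} :=
  rStatLimit_subset_of_subseq_general p x nk hmono hd r
end

section
/- Let X be a nonempty set, p a partial metric on X, and {x_n}, {y_n} two sequences in X such that p(x_n, y_n) → 0 as n → ∞. If {x_n} is rough statistically convergent to x with roughness degree r ≥ 0 and the self-distances satisfy p(x_n, x_n) → 0 as n → ∞, then {y_n} is rough statistically convergent to x with the same roughness degree r. -/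
/-!
The partial-metric triangle inequality gives `|p(y_n, l) - p(x_n, l)| ≤ p(x_n, y_n) → 0`.
Hence for large `n`, `r + ε ≤ |p(y_n, l) - p(l, l)|` forces `r + ε/2 ≤ |p(x_n, l) - p(l, l)|`,
and a set that lies in a density-zero set up to finitely many elements has density zero.
-/

open Filter Topology

namespace IsPartialMetric

variable {X : Type*} {p : X → X → ℝ}

theorem abs_sub_le (hp : IsPartialMetric p) (x y z : X) : |p y z - p x z| ≤ p x y := by
  have hyx := hp.triangle y z x
  have hxy := hp.triangle x z y
  rw [hp.symm y x] at hyx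
  rw [abs_sub_le_iff]
  constructor <;> linarith [hp.nonneg x x, hp.nonneg y y]

end IsPartialMetric

open Classical in
theorem card_filter_range_le_add {A B : Set ℕ} {N : ℕ} (h : ∀ n ≥ N, n ∈ A → n ∈ B) (n : ℕ) :
    ((Finset.range n).filter (fun k => k ∈ A)).card ≤
      ((Finset.range n).filter (fun k => k ∈ B)).card + N := by
  have hsub : (Finset.range n).filter (fun k => k ∈ A) ⊆
      (Finset.range n).filter (fun k => k ∈ B) ∪ Finset.range N := by
    intro k hk
    simp only [Finset.mem_filter, Finset.mem_union, Finset.mem_range] at hk ⊢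
    by_cases hkN : k < N
    · exact Or.inr hkN
    · exact Or.inl ⟨hk.1, h k (not_lt.mp hkN) hk.2⟩
  calc _ ≤ _ := Finset.card_le_card hsub
    _ ≤ _ := Finset.card_union_le _ _
    _ = _ := by rw [Finset.card_range]

theorem HasNatDensity.zero_of_eventually_imp {A B : Set ℕ} (hB : HasNatDensity B 0)
    (h : ∀ᶠ n in atTop, n ∈ A → n ∈ B) : HasNatDensity A 0 := by
  classical
  obtain ⟨N, hN⟩ := eventually_atTop.mp h
  have hbound := hB.add (tendsto_const_div_atTop_nhds_zero_nat (N : ℝ))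
  rw [add_zero] at hbound
  refine squeeze_zero (fun n => by positivity) (fun n => ?_) hbound
  rw [← add_div]
  gcongr
  exact_mod_cast card_filter_range_le_add hN n

theorem RStatLimit.of_tendsto_abs_sub {X : Type*} {p : X → X → ℝ} {x y : ℕ → X} {r : ℝ} {l : X}
    (hx : RStatLimit p x r l)
    (hxy : Tendsto (fun n => |p (y n) l - p (x n) l|) atTop (𝓝 0)) :
    RStatLimit p y r l := by
  intro ε hε
  refine (hx (ε / 2) (half_pos hε)).zero_of_eventually_imp ?_
  filter_upwards [hxy.eventually (gt_mem_nhds (half_pos hε))] with n hclose hy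
  have htri := abs_sub_abs_le_abs_sub (p (y n) l - p l l) (p (x n) l - p l l)
  rw [sub_sub_sub_cancel_right] at htri
  linarith

theorem rStatLimit_transfer_general
    {X : Type*} (p : X → X → ℝ) (hp : IsPartialMetric p)
    (x y : ℕ → X)
    (hxy : Filter.Tendsto (fun n : ℕ => p (x n) (y n)) Filter.atTop (nhds 0))
    (l : X) (r : ℝ) (hx : RStatLimit p x r l) :
    RStatLimit p y r l :=
  hx.of_tendsto_abs_sub <|
    squeeze_zero (fun _ => abs_nonneg _) (fun n => hp.abs_sub_le (x n) (y n) l) hxy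

/-- If `p (x_n, y_n) → 0`, `x_n` is `r`-statistically convergent to `x`, and the
self-distances `p (x_n, x_n) → 0`, then `y_n` is `r`-statistically convergent to `x`. -/
theorem rStatLimit_transfer
    {X : Type*} [Nonempty X] (p : X → X → ℝ) (hp : IsPartialMetric p)
    (x y : ℕ → X)
    (hxy : Filter.Tendsto (fun n : ℕ => p (x n) (y n)) Filter.atTop (nhds 0))
    (l : X) (r : ℝ) (hr : 0 ≤ r) (hx : RStatLimit p x r l)
    (hselfx : Filter.Tendsto (fun n : ℕ => p (x n) (x n)) Filter.atTop (nhds 0)) :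
    RStatLimit p y r l :=
  rStatLimit_transfer_general p hp x y hxy l r hx
end

section
/- Let X be a nonempty set, p a partial metric on X, and a a positive real number such that p(x,x) = a for all x ∈ X. Let {x_n} be a sequence in X and r > 0. If c is a statistical cluster point of {x_n} (i.e., for every ε > 0 the set {n ∈ ℕ : |p(x_n,c) − p(c,c)| < ε} does NOT have natural density zero), then st-LIM^r x_n is contained in the closed ball {y ∈ X : p(c,y) ≤ p(c,c) + r} of radius r centered at c. -/
/-- If all self-distances equal `a > 0` and `c` is a statistical cluster point of `x_n`,
then `st-LIM^r x_n` is contained in the closed ball of radius `r > 0` centered at `c`. -/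
theorem rStatLimit_subset_closedBall_of_statClusterPt
    {X : Type*} [Nonempty X] (p : X → X → ℝ) (hp : IsPartialMetric p)
    (a : ℝ) (ha : 0 < a) (hself : ∀ x : X, p x x = a)
    (x : ℕ → X) (r : ℝ) (hr : 0 < r)
    (c : X)
    (hc : ∀ ε : ℝ, 0 < ε → ¬ HasNatDensity {n : ℕ | |p (x n) c - p c c| < ε} 0) :
    {y : X | RStatLimit p x r y} ⊆ {y : X | p c y ≤ p c c + r} := by
  intro y hy
  by_contra hcon
  simp only [Set.mem_setOf_eq, not_le] at hcon
  set ε := (p c y - p c c - r) / 2 with hε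
  have hεpos : 0 < ε := by simp [hε]; linarith
  have hB := hy ε hεpos
  have hA := hc ε hεpos
  have hsub : ¬ ({n : ℕ | |p (x n) c - p c c| < ε} ⊆
      {n : ℕ | r + ε ≤ |p (x n) y - p y y|}) := by
    intro hs
    exact hA (hasNatDensity_zero_mono hs hB)
  rw [Set.not_subset] at hsub
  obtain ⟨n, hn1, hn2⟩ := hsub
  simp only [Set.mem_setOf_eq, not_le] at hn1 hn2
  have ht := hp.triangle c y (x n)
  have h1 : p c (x n) < p c c + ε := by
    rw [hp.symm c (x n)]
    have := abs_lt.mp hn1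
    linarith [this.2]
  have h2 : p (x n) y < p y y + r + ε := by
    have := abs_lt.mp hn2
    linarith [this.2]
  have hxx : p (x n) (x n) = a := hself _
  have hyy : p y y = a := hself _
  have hcc : p c c = a := hself _
  linarith
end
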